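/- Let P be a finite poset and S = (S_x : x ∈ P) an irreducible inclusion representation of P. If |⋃S| = |P|, then |S_x| = |D_P[x]| for every x ∈ P. -/
import Mathlib


open scoped Classical

/-- `S` is an inclusion representation of the poset `α`. -/
def IsRepr {α β : Type} [PartialOrder α] (S : α → Finset β) : Prop :=
  ∀ x y : α, x ≤ y ↔ S x ⊆ S y

/-- The ground set of a representation. -/
noncomputable def ground {α β : Type} [Fintype α] (S : α → Finset β) : Finset β :=
  Finset.univ.biUnion S

/-- `S` is a reduction of `T`. -/
def IsReduction {α β γ : Type} [Fintype α] (S : α → Finset β) (T : α → Finset γ) : Prop :=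
  (ground S).card ≤ (ground T).card ∧ ∀ x, (S x).card ≤ (T x).card

/-- An inclusion representation is irreducible if it admits no strict reduction. -/
def IrreducibleRepr {α β : Type} [PartialOrder α] [Fintype α] (S : α → Finset β) : Prop :=
  IsRepr S ∧ ∀ T : α → Finset ℕ, IsRepr T → IsReduction T S → IsReduction S T

/-- Maximum ground-set size over irreducible inclusion representations. -/
noncomputable def iir (α : Type) [PartialOrder α] [Fintype α] : ℕ :=
  sSup {w | ∃ S : α → Finset ℕ, IrreducibleRepr S ∧ (ground S).card = w}

/-- Cube height. -/
noncomputable def chHeight (α : Type) [PartialOrder α] [Fintype α] : ℕ :=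
  sInf {h | ∃ S : α → Finset ℕ, IsRepr S ∧ ∀ x, (S x).card ≤ h}

/-- 2-dimension. -/
noncomputable def dim2 (α : Type) [PartialOrder α] [Fintype α] : ℕ :=
  sInf {w | ∃ S : α → Finset ℕ, IsRepr S ∧ (ground S).card = w}

/-- Cube width. -/
noncomputable def cw (α : Type) [PartialOrder α] [Fintype α] : ℕ :=
  sInf {w | ∃ S : α → Finset ℕ, IsRepr S ∧ (ground S).card = w ∧ ∀ x, (S x).card ≤ chHeight α}

/-- Closed down-set `D_P[x]` as a finset. -/
noncomputable def downSet {α : Type} [PartialOrder α] [Fintype α] (x : α) : Finset α :=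
  Finset.univ.filter (· ≤ x)

/-- The canonical inclusion representation. -/
noncomputable def canonical (α : Type) [PartialOrder α] [Fintype α] : α → Finset α :=
  fun x => downSet x

/-- No Block is a Chain Property. -/
def NoBlockChain (α : Type) [PartialOrder α] : Prop :=
  ∀ x : α, ∃ y : α, ¬ x ≤ y ∧ ¬ y ≤ x

/-- Two Down Property. -/
def TwoDown (α : Type) [PartialOrder α] : Prop :=
  ∀ y : α, (∃ a b : α, a ≠ b ∧ a ⋖ y ∧ b ⋖ y) →
    ∃ z : α, (∀ u : α, u < y → u < z) ∧ ¬ y ≤ z ∧ ¬ z ≤ y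

/-- Parallel Pair Property. -/
def ParallelPair (α : Type) [PartialOrder α] : Prop :=
  ∀ x y : α, ¬ x ≤ y → ¬ y ≤ x →
    (∃ y' : α, (∀ u : α, u < x → u < y') ∧ y ≤ y' ∧ ¬ x ≤ y' ∧ ¬ y' ≤ x) ∨
    (∃ x' : α, (∀ u : α, u < y → u < x') ∧ x ≤ x' ∧ ¬ y ≤ x' ∧ ¬ x' ≤ y)

/-- A vertical decomposition of a poset into two non-empty parts. -/
def IsVerticalDecomp {α : Type} [PartialOrder α] (A B : Set α) : Prop :=
  A.Nonempty ∧ B.Nonempty ∧ (∀ x, x ∈ A ∨ x ∈ B) ∧ ∀ x ∈ A, ∀ y ∈ B, x < y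

/-- A block is a chain or a vertical prime. -/
def IsBlock (α : Type) [PartialOrder α] : Prop :=
  (∀ x y : α, x ≤ y ∨ y ≤ x) ∨ ¬ ∃ A B : Set α, IsVerticalDecomp A B

lemma mem_ground_iff {α β : Type} [Fintype α] {S : α → Finset β} {p : β} :
    p ∈ ground S ↔ ∃ x, p ∈ S x := by
  unfold ground
  simp [Finset.mem_biUnion]

/-- an irreducible representation with ground set of size `|P|`
realizes every element by a set of size `|D_P[x]|`. -/
theorem irreducible_full_ground_downsets (α : Type) {β : Type} [PartialOrder α] [Fintype α]
    (S : α → Finset β) (hS : IrreducibleRepr S)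
    (hcard : (ground S).card = Fintype.card α) :
    ∀ x : α, (S x).card = (downSet x).card := by
  obtain ⟨hrepr, hirr⟩ := hS
  have hmemG : ∀ {p : β} {x : α}, p ∈ S x → p ∈ ground S := fun {p x} hp =>
    Finset.mem_biUnion.2 ⟨x, Finset.mem_univ x, hp⟩
  set G : Finset β := ground S with hG
  -- an injection from α into ℕ
  set eα : α → ℕ := fun a => ((Fintype.equivFin α) a : ℕ) with heαdef
  have heα : Function.Injective eα := fun a b h =>
    (Fintype.equivFin α).injective (Fin.val_injective h)
  -- the upset of elements whose set contains p
  set U : β → Finset α := fun p => Finset.univ.filter (fun z => p ∈ S z) with hU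
  have hUmem : ∀ {p : β} {z : α}, z ∈ U p ↔ p ∈ S z := by
    intro p z; simp [hU]
  by_cases hHall : ∀ A : Finset β, A ⊆ G → A.card ≤ (A.biUnion U).card
  · -- Hall's condition holds: a perfect matching exists
    have hcond : ∀ s : Finset {p // p ∈ G}, s.card ≤ (s.biUnion (fun p => U p.1)).card := by
      intro s
      have h1 : (s.image Subtype.val).card = s.card :=
        Finset.card_image_of_injective _ Subtype.val_injective
      have h2 : (s.image Subtype.val).biUnion U = s.biUnion (fun p => U p.1) := by
        ext z
        simp [Finset.mem_biUnion]
      have h3 : s.image Subtype.val ⊆ G := by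
        intro p hp
        obtain ⟨q, _, rfl⟩ := Finset.mem_image.1 hp
        exact q.2
      calc s.card = (s.image Subtype.val).card := h1.symm
        _ ≤ ((s.image Subtype.val).biUnion U).card := hHall _ h3
        _ = _ := by rw [h2]
    obtain ⟨μ, hμinj, hμmem⟩ :=
      (Finset.all_card_le_biUnion_card_iff_exists_injective
        (fun p : {p // p ∈ G} => U p.1)).1 hcond
    have hcardsub : Fintype.card {p // p ∈ G} = Fintype.card α := by
      rw [Fintype.card_coe]; exact hcard
    have hμbij : Function.Bijective μ :=
      (Fintype.bijective_iff_injective_and_card μ).2 ⟨hμinj, hcardsub⟩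
    -- lower bound: |downSet x| ≤ |S x|
    have hlow : ∀ x : α, (downSet x).card ≤ (S x).card := by
      intro x
      have hg : ∀ z : α, ∃ p : {p // p ∈ G}, μ p = z := hμbij.2
      have hgmem : ∀ z : α, ((hg z).choose : {p // p ∈ G}).1 ∈ S z := by
        intro z
        have h1 := hμmem (hg z).choose
        rw [(hg z).choose_spec] at h1
        exact hUmem.1 h1
      apply Finset.card_le_card_of_injOn (fun z => ((hg z).choose : {p // p ∈ G}).1)
      · intro z hz
        have hzx : z ≤ x := by simpa [downSet] using hz
        exact (hrepr z x).1 hzx (hgmem z)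
      · intro z _ z' _ hzz
        have h : (hg z).choose = (hg z').choose := Subtype.ext hzz
        rw [← (hg z).choose_spec, ← (hg z').choose_spec, h]
    set T : α → Finset ℕ := fun x => (downSet x).image eα with hT
    have hTrepr : IsRepr T := by
      intro x y
      constructor
      · intro hxy
        apply Finset.image_subset_image
        intro z hz
        simp only [downSet, Finset.mem_filter] at hz ⊢
        exact ⟨hz.1, hz.2.trans hxy⟩
      · intro h
        have hx : eα x ∈ T x := Finset.mem_image_of_mem _ (by simp [downSet])
        have hy := h hx
        obtain ⟨z, hz, hzz⟩ := Finset.mem_image.1 hy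
        have hzx : z = x := heα hzz
        subst hzx
        simpa [downSet] using hz
    have hTground : (ground T).card = Fintype.card α := by
      have hgr : ground T = Finset.univ.image eα := by
        apply Finset.Subset.antisymm
        · intro n hn
          obtain ⟨x, hx⟩ := mem_ground_iff.1 hn
          obtain ⟨z, _, rfl⟩ := Finset.mem_image.1 hx
          exact Finset.mem_image_of_mem _ (Finset.mem_univ z)
        · intro n hn
          obtain ⟨z, _, rfl⟩ := Finset.mem_image.1 hn
          exact mem_ground_iff.2 ⟨z, Finset.mem_image_of_mem _ (by simp [downSet])⟩
      rw [hgr, Finset.card_image_of_injective _ heα, Finset.card_univ]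
    have hTcard : ∀ x, (T x).card = (downSet x).card := fun x =>
      Finset.card_image_of_injective _ heα
    have hred : IsReduction T S := by
      constructor
      · exact le_of_eq (hTground.trans hcard.symm)
      · intro x; rw [hTcard x]; exact hlow x
    have hback := hirr T hTrepr hred
    intro x
    exact le_antisymm ((hback.2 x).trans (hTcard x).le) (hlow x)
  · -- Hall's condition fails
    push_neg at hHall
    obtain ⟨A₀, hA₀G, hA₀⟩ := hHall
    have hex : ∃ n, ∃ A : Finset β, A ⊆ G ∧ (A.biUnion U).card < A.card ∧ A.card = n :=
      ⟨A₀.card, A₀, hA₀G, hA₀, rfl⟩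
    obtain ⟨A, hAG, hAviol, hAn⟩ := Nat.find_spec hex
    have hmin : ∀ A' : Finset β, A' ⊆ G → A'.card < A.card →
        A'.card ≤ (A'.biUnion U).card := by
      intro A' hA'G hlt
      by_contra hc
      push_neg at hc
      exact Nat.find_min hex (by omega) ⟨A', hA'G, hc, rfl⟩
    set W : Finset α := A.biUnion U with hWdef
    have hW : W.card < A.card := hAviol
    have hAne : A.Nonempty := Finset.card_pos.1 (by omega)
    obtain ⟨b0, hb0⟩ := hAne
    -- inner Hall condition: matching from W into A
    have hcond2 : ∀ s : Finset {z : α // z ∈ W},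
        s.card ≤ (s.biUnion (fun z => A.filter (fun p => p ∈ S z.1))).card := by
      intro s
      have hBW : s.image Subtype.val ⊆ W := by
        intro z hz
        obtain ⟨q, _, rfl⟩ := Finset.mem_image.1 hz
        exact q.2
      have hBcard : (s.image Subtype.val).card = s.card :=
        Finset.card_image_of_injective _ Subtype.val_injective
      have hNeq : (s.image Subtype.val).biUnion (fun z => A.filter (fun p => p ∈ S z))
          = s.biUnion (fun z => A.filter (fun p => p ∈ S z.1)) := by
        ext p
        simp [Finset.mem_biUnion]
      rw [← hNeq, ← hBcard]
      set B : Finset α := s.image Subtype.val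
      set N : Finset β := B.biUnion (fun z => A.filter (fun p => p ∈ S z)) with hNdef
      by_contra hc
      push_neg at hc
      have hNA : N ⊆ A := by
        intro p hp
        obtain ⟨z, _, hpz⟩ := Finset.mem_biUnion.1 hp
        exact (Finset.mem_filter.1 hpz).1
      have hBne : B.Nonempty := Finset.card_pos.1 (by omega)
      obtain ⟨z0, hz0⟩ := hBne
      have hz0W : z0 ∈ A.biUnion U := by rw [← hWdef]; exact hBW hz0
      obtain ⟨p0, hp0A, hp0⟩ := Finset.mem_biUnion.1 hz0W
      have hp0S : p0 ∈ S z0 := hUmem.1 hp0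
      have hp0N : p0 ∈ N :=
        Finset.mem_biUnion.2 ⟨z0, hz0, Finset.mem_filter.2 ⟨hp0A, hp0S⟩⟩
      have hA'card : (A \ N).card = A.card - N.card := Finset.card_sdiff_of_subset hNA
      have hNpos : 0 < N.card := Finset.card_pos.2 ⟨p0, hp0N⟩
      have hNleA : N.card ≤ A.card := Finset.card_le_card hNA
      have h1 : (A \ N).card ≤ ((A \ N).biUnion U).card :=
        hmin _ (fun p hp => hAG (Finset.mem_sdiff.1 hp).1) (by omega)
      have h2 : (A \ N).biUnion U ⊆ W \ B := by
        intro z hz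
        obtain ⟨p, hpA', hpz⟩ := Finset.mem_biUnion.1 hz
        have hpS : p ∈ S z := hUmem.1 hpz
        have hpA : p ∈ A := (Finset.mem_sdiff.1 hpA').1
        refine Finset.mem_sdiff.2 ⟨?_, ?_⟩
        · rw [hWdef]
          exact Finset.mem_biUnion.2 ⟨p, hpA, hUmem.2 hpS⟩
        · intro hzB
          exact (Finset.mem_sdiff.1 hpA').2
            (Finset.mem_biUnion.2 ⟨z, hzB, Finset.mem_filter.2 ⟨hpA, hpS⟩⟩)
      have h3 : (W \ B).card = W.card - B.card := Finset.card_sdiff_of_subset hBW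
      have h4 : ((A \ N).biUnion U).card ≤ (W \ B).card := Finset.card_le_card h2
      have hBleW : B.card ≤ W.card := Finset.card_le_card hBW
      omega
    obtain ⟨f, hfinj, hfmem⟩ :=
      (Finset.all_card_le_biUnion_card_iff_exists_injective
        (fun z : {z : α // z ∈ W} => A.filter (fun p => p ∈ S z.1))).1 hcond2
    -- encodings into ℕ with disjoint parities
    set e1 : β → ℕ := fun p => if h : p ∈ G then 2 * ((G.equivFin ⟨p, h⟩ : Fin G.card) : ℕ) else 0
      with he1def
    set e2 : α → ℕ := fun z => 2 * eα z + 1 with he2def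
    have he1 : ∀ p ∈ G, ∀ q ∈ G, e1 p = e1 q → p = q := by
      intro p hp q hq h
      simp only [he1def, dif_pos hp, dif_pos hq] at h
      have h' : (G.equivFin ⟨p, hp⟩ : Fin G.card) = (G.equivFin ⟨q, hq⟩ : Fin G.card) :=
        Fin.val_injective (by omega)
      exact congrArg Subtype.val (G.equivFin.injective h')
    set T : α → Finset ℕ := fun x =>
      ((G \ A).filter (fun p => p ∈ S x)).image e1 ∪ ((W.filter (fun z => z ≤ x)).image e2)
      with hT
    have hTrepr : IsRepr T := by
      intro x y
      constructor
      · intro hxy n hn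
        rcases Finset.mem_union.1 hn with h | h
        · obtain ⟨p, hp, rfl⟩ := Finset.mem_image.1 h
          obtain ⟨hpGA, hpS⟩ := Finset.mem_filter.1 hp
          exact Finset.mem_union_left _ (Finset.mem_image_of_mem _
            (Finset.mem_filter.2 ⟨hpGA, (hrepr x y).1 hxy hpS⟩))
        · obtain ⟨z, hz, rfl⟩ := Finset.mem_image.1 h
          obtain ⟨hzW, hzx⟩ := Finset.mem_filter.1 hz
          exact Finset.mem_union_right _ (Finset.mem_image_of_mem _
            (Finset.mem_filter.2 ⟨hzW, hzx.trans hxy⟩))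
      · intro h
        by_contra hxy
        have hnsub : ¬ S x ⊆ S y := fun hsub => hxy ((hrepr x y).2 hsub)
        obtain ⟨p, hpx, hpy⟩ := Finset.not_subset.1 hnsub
        have hpG : p ∈ G := hmemG hpx
        by_cases hpA : p ∈ A
        · have hxW : x ∈ W := by
            rw [hWdef]
            exact Finset.mem_biUnion.2 ⟨p, hpA, hUmem.2 hpx⟩
          have h1 : e2 x ∈ T x := Finset.mem_union_right _
            (Finset.mem_image_of_mem _ (Finset.mem_filter.2 ⟨hxW, le_refl x⟩))
          have h2 := h h1
          rcases Finset.mem_union.1 h2 with h3 | h3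
          · obtain ⟨q, _, hq⟩ := Finset.mem_image.1 h3
            by_cases hqG : q ∈ G
            · simp only [he1def, he2def, dif_pos hqG] at hq; omega
            · simp only [he1def, he2def, dif_neg hqG] at hq; omega
          · obtain ⟨z, hz, hzz⟩ := Finset.mem_image.1 h3
            have hze : eα z = eα x := by simp only [he2def] at hzz; omega
            have hzx : z = x := heα hze
            subst hzx
            exact hxy (Finset.mem_filter.1 hz).2
        · have h1 : e1 p ∈ T x := Finset.mem_union_left _
            (Finset.mem_image_of_mem _
              (Finset.mem_filter.2 ⟨Finset.mem_sdiff.2 ⟨hpG, hpA⟩, hpx⟩))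
          have h2 := h h1
          rcases Finset.mem_union.1 h2 with h3 | h3
          · obtain ⟨q, hq, hqq⟩ := Finset.mem_image.1 h3
            have hqG : q ∈ G := (Finset.mem_sdiff.1 (Finset.mem_filter.1 hq).1).1
            have hqp : q = p := he1 q hqG p hpG hqq
            subst hqp
            exact hpy (Finset.mem_filter.1 hq).2
          · obtain ⟨z, _, hzz⟩ := Finset.mem_image.1 h3
            simp only [he1def, he2def, dif_pos hpG] at hzz; omega
    have hsub : ground T ⊆ ((G \ A).image e1) ∪ (W.image e2) := by
      intro n hn
      obtain ⟨x, hx⟩ := mem_ground_iff.1 hn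
      rcases Finset.mem_union.1 hx with h | h
      · obtain ⟨p, hp, rfl⟩ := Finset.mem_image.1 h
        exact Finset.mem_union_left _ (Finset.mem_image_of_mem _ (Finset.mem_filter.1 hp).1)
      · obtain ⟨z, hz, rfl⟩ := Finset.mem_image.1 h
        exact Finset.mem_union_right _ (Finset.mem_image_of_mem _ (Finset.mem_filter.1 hz).1)
    have hAcard : A.card ≤ G.card := Finset.card_le_card hAG
    have hgcard : (ground T).card < G.card := by
      calc (ground T).card ≤ (((G \ A).image e1) ∪ (W.image e2)).card :=
            Finset.card_le_card hsub
        _ ≤ ((G \ A).image e1).card + (W.image e2).card := Finset.card_union_le _ _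
        _ ≤ (G \ A).card + W.card := Nat.add_le_add Finset.card_image_le Finset.card_image_le
        _ < G.card := by rw [Finset.card_sdiff_of_subset hAG]; omega
    have hpt : ∀ x, (T x).card ≤ (S x).card := by
      intro x
      have hc1 : (((G \ A).filter (fun p => p ∈ S x)).image e1).card ≤
          ((S x).filter (fun p => p ∉ A)).card := by
        refine le_trans Finset.card_image_le (Finset.card_le_card ?_)
        intro p hp
        obtain ⟨hpGA, hpS⟩ := Finset.mem_filter.1 hp
        exact Finset.mem_filter.2 ⟨hpS, (Finset.mem_sdiff.1 hpGA).2⟩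
      have hc2 : ((W.filter (fun z => z ≤ x)).image e2).card ≤
          ((S x).filter (fun p => p ∈ A)).card := by
        refine le_trans Finset.card_image_le ?_
        apply Finset.card_le_card_of_injOn (fun z => if h : z ∈ W then (f ⟨z, h⟩ : β) else b0)
        · intro z hz
          obtain ⟨hzW, hzx⟩ := Finset.mem_filter.1 hz
          have hm := hfmem ⟨z, hzW⟩
          obtain ⟨hfa, hfs⟩ := Finset.mem_filter.1 hm
          simp only [dif_pos hzW]
          exact Finset.mem_filter.2 ⟨(hrepr z x).1 hzx hfs, hfa⟩
        · intro z hz z' hz' hzz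
          simp only [Finset.coe_filter, Set.mem_setOf_eq] at hz hz'
          simp only [dif_pos hz.1, dif_pos hz'.1] at hzz
          exact congrArg Subtype.val (hfinj (hzz : f ⟨z, hz.1⟩ = f ⟨z', hz'.1⟩))
      have hdisj : Disjoint ((S x).filter (fun p => p ∉ A)) ((S x).filter (fun p => p ∈ A)) := by
        rw [Finset.disjoint_left]
        intro p hp hp'
        exact (Finset.mem_filter.1 hp).2 (Finset.mem_filter.1 hp').2
      have hunion : ((S x).filter (fun p => p ∉ A)).card + ((S x).filter (fun p => p ∈ A)).card
          ≤ (S x).card := by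
        rw [← Finset.card_union_of_disjoint hdisj]
        exact Finset.card_le_card (Finset.union_subset
          (Finset.filter_subset _ _) (Finset.filter_subset _ _))
      calc (T x).card ≤ (((G \ A).filter (fun p => p ∈ S x)).image e1).card +
            ((W.filter (fun z => z ≤ x)).image e2).card := Finset.card_union_le _ _
        _ ≤ ((S x).filter (fun p => p ∉ A)).card + ((S x).filter (fun p => p ∈ A)).card :=
            Nat.add_le_add hc1 hc2
        _ ≤ (S x).card := hunion
    have hred : IsReduction T S := ⟨le_of_lt hgcard, hpt⟩
    have hback := hirr T hTrepr hred
    exact absurd hback.1 (not_le.2 hgcard)
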